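/- Let H be a Hopf algebra with nonzero left integral ∫, and let V be a right H-comodule with coaction v ↦ v₀ ⊗ v₁. Then the formula h * v := v₀ ∫(v₁ S(h)) defines a left module structure over the non-unital algebra (H, *), where g * h := h₁ ∫(h₂ S(g)). -/

import Mathlib

open TensorProduct LinearMap

noncomputable section

variable (k : Type*) [Field k] (H : Type*) [Ring H] [HopfAlgebra k H]

/-- `∫` is a left integral on `H`: `a₁ ∫(a₂) = ∫(a) 1` for all `a`. -/
def IsLeftIntegral (I : H →ₗ[k] k) : Prop :=
  ∀ a : H, TensorProduct.rid k H (LinearMap.lTensor H I (Coalgebra.comul a)) = I a • (1 : H)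

/-- `∫` is a right integral on `H`: `∫(a₁) a₂ = ∫(a) 1` for all `a`. -/
def IsRightIntegral (I : H →ₗ[k] k) : Prop :=
  ∀ a : H, TensorProduct.lid k H (LinearMap.rTensor H I (Coalgebra.comul a)) = I a • (1 : H)

/-- The linear map `h ⊗ g ↦ ∫(h S(g))`. -/
def intPair (I : H →ₗ[k] k) : H ⊗[k] H →ₗ[k] k :=
  I ∘ₗ LinearMap.mul' k H ∘ₗ LinearMap.lTensor H (HopfAlgebra.antipode (R := k))

/-- The linear map `g ⊗ h ↦ h₁ ∫(h₂ S(g))` (the convolution product). -/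
def convMap (I : H →ₗ[k] k) : H ⊗[k] H →ₗ[k] H :=
  (TensorProduct.rid k H).toLinearMap
    ∘ₗ LinearMap.lTensor H (intPair k H I)
    ∘ₗ (TensorProduct.assoc k H H H).toLinearMap
    ∘ₗ (Coalgebra.comul (R := k)).rTensor H
    ∘ₗ (TensorProduct.comm k H H).toLinearMap

/-- The convolution product `g * h := h₁ ∫(h₂ S(g))`. -/
def convProd (I : H →ₗ[k] k) (g h : H) : H := convMap k H I (g ⊗ₜ h)

/-- The linear map `g ⊗ h ↦ ∫(h S(g₁)) g₂`. -/
def convMap' (I : H →ₗ[k] k) : H ⊗[k] H →ₗ[k] H :=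
  (TensorProduct.lid k H).toLinearMap
    ∘ₗ (intPair k H I).rTensor H
    ∘ₗ (TensorProduct.assoc k H H H).symm.toLinearMap
    ∘ₗ LinearMap.lTensor H (Coalgebra.comul (R := k))
    ∘ₗ (TensorProduct.comm k H H).toLinearMap

variable (M : Type*) [AddCommGroup M] [Module k M]

/-- The action `h * v := v₀ ∫(v₁ S(h))` of `(H,*)` on a right `H`-comodule. -/
def convAct (I : H →ₗ[k] k) (ρ : M →ₗ[k] M ⊗[k] H) (h : H) : M →ₗ[k] M :=
  (TensorProduct.rid k M).toLinearMap
    ∘ₗ LinearMap.lTensor M (I ∘ₗ LinearMap.mulRight k (HopfAlgebra.antipode (R := k) h))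
    ∘ₗ ρ

/-- `ρ` is a (counital, coassociative) right comodule coaction. -/
def IsCoact (ρ : M →ₗ[k] M ⊗[k] H) : Prop :=
  ((TensorProduct.assoc k M H H).toLinearMap ∘ₗ ρ.rTensor H ∘ₗ ρ
      = (LinearMap.lTensor M (Coalgebra.comul (R := k))) ∘ₗ ρ) ∧
  ((TensorProduct.rid k M).toLinearMap ∘ₗ LinearMap.lTensor M (Coalgebra.counit (R := k)) ∘ₗ ρ
      = LinearMap.id)

section ConvolutionAux

open Coalgebra HopfAlgebra

variable {k₀ : Type*} [Field k₀] {C B : Type*} [AddCommGroup C] [Module k₀ C] [Coalgebra k₀ C]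
  [Ring B] [Algebra k₀ B]

/-- The convolution product on `C →ₗ[k₀] B`. -/
def cv (f g : C →ₗ[k₀] B) : C →ₗ[k₀] B :=
  LinearMap.mul' k₀ B ∘ₗ TensorProduct.map f g ∘ₗ Coalgebra.comul

/-- The convolution unit on `C →ₗ[k₀] B`. -/
def cvOne : C →ₗ[k₀] B := Algebra.linearMap k₀ B ∘ₗ Coalgebra.counit

@[simp] lemma cvOne_apply' (a : C) :
    (cvOne : C →ₗ[k₀] B) a = algebraMap k₀ B (Coalgebra.counit (R := k₀) a) := rfl

lemma cv_repr (f g : C →ₗ[k₀] B) {a : C} {ι : Type*} (r : Coalgebra.Repr k₀ a ι) :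
    cv f g a = ∑ i ∈ r.index, f (r.left i) * g (r.right i) := by
  simp only [cv, LinearMap.comp_apply, ← r.eq, map_sum, TensorProduct.map_tmul,
    LinearMap.mul'_apply]

lemma sum_smul_counit {a : C} {ι : Type*} (r : Coalgebra.Repr k₀ a ι) :
    ∑ i ∈ r.index, Coalgebra.counit (R := k₀) (r.right i) • r.left i = a := by
  have h := congrArg (TensorProduct.rid k₀ C) (Coalgebra.sum_tmul_counit_eq r)
  simp only [map_sum, TensorProduct.rid_tmul, one_smul] at h
  exact h

lemma counit_smul_sum {a : C} {ι : Type*} (r : Coalgebra.Repr k₀ a ι) :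
    ∑ i ∈ r.index, Coalgebra.counit (R := k₀) (r.left i) • r.right i = a := by
  have h := congrArg (TensorProduct.lid k₀ C) (Coalgebra.sum_counit_tmul_eq r)
  simp only [map_sum, TensorProduct.lid_tmul, one_smul] at h
  exact h

lemma cv_one_right (f : C →ₗ[k₀] B) : cv f (cvOne) = f := by
  ext a
  rw [cv_repr f _ (ℛ k₀ a)]
  have h2 : ∀ i ∈ (ℛ k₀ a).index, f ((ℛ k₀ a).left i) * (cvOne : C →ₗ[k₀] B) ((ℛ k₀ a).right i)
      = Coalgebra.counit (R := k₀) ((ℛ k₀ a).right i) • f ((ℛ k₀ a).left i) := by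
    intro i _
    rw [cvOne_apply', ← Algebra.commutes, ← Algebra.smul_def]
  rw [Finset.sum_congr rfl h2,
    show ∑ i ∈ (ℛ k₀ a).index, Coalgebra.counit (R := k₀) ((ℛ k₀ a).right i) • f ((ℛ k₀ a).left i)
      = f (∑ i ∈ (ℛ k₀ a).index,
          Coalgebra.counit (R := k₀) ((ℛ k₀ a).right i) • (ℛ k₀ a).left i) by
        simp [map_sum],
    sum_smul_counit]

lemma cv_one_left (f : C →ₗ[k₀] B) : cv (cvOne) f = f := by
  ext a
  rw [cv_repr _ f (ℛ k₀ a)]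
  have h2 : ∀ i ∈ (ℛ k₀ a).index, (cvOne : C →ₗ[k₀] B) ((ℛ k₀ a).left i) * f ((ℛ k₀ a).right i)
      = Coalgebra.counit (R := k₀) ((ℛ k₀ a).left i) • f ((ℛ k₀ a).right i) := by
    intro i _
    rw [cvOne_apply', ← Algebra.smul_def]
  rw [Finset.sum_congr rfl h2,
    show ∑ i ∈ (ℛ k₀ a).index, Coalgebra.counit (R := k₀) ((ℛ k₀ a).left i) • f ((ℛ k₀ a).right i)
      = f (∑ i ∈ (ℛ k₀ a).index,
          Coalgebra.counit (R := k₀) ((ℛ k₀ a).left i) • (ℛ k₀ a).right i) by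
        simp [map_sum],
    counit_smul_sum]

lemma cv_assoc (f g h : C →ₗ[k₀] B) : cv (cv f g) h = cv f (cv g h) := by
  ext a
  have key := Coalgebra.sum_map_tmul_tmul_eq (f := f) (g := g) (h := h) a (repr := ℛ k₀ a)
    (a₁ := fun i => ℛ k₀ ((ℛ k₀ a).left i)) (a₂ := fun i => ℛ k₀ ((ℛ k₀ a).right i))
  have key2 := congrArg (LinearMap.mul' k₀ B ∘ₗ LinearMap.lTensor B (LinearMap.mul' k₀ B)) key
  simp only [map_sum, LinearMap.comp_apply, LinearMap.lTensor_tmul, LinearMap.mul'_apply] at key2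
  have e1 : cv (cv f g) h a = ∑ i ∈ (ℛ k₀ a).index,
      ∑ j ∈ (ℛ k₀ ((ℛ k₀ a).left i)).index,
        f ((ℛ k₀ ((ℛ k₀ a).left i)).left j) * (g ((ℛ k₀ ((ℛ k₀ a).left i)).right j)
          * h ((ℛ k₀ a).right i)) := by
    rw [cv_repr (cv f g) h (ℛ k₀ a)]
    refine Finset.sum_congr rfl fun i _ => ?_
    rw [cv_repr f g (ℛ k₀ ((ℛ k₀ a).left i)), Finset.sum_mul]
    exact Finset.sum_congr rfl fun j _ => mul_assoc _ _ _
  have e2 : cv f (cv g h) a = ∑ i ∈ (ℛ k₀ a).index,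
      ∑ j ∈ (ℛ k₀ ((ℛ k₀ a).right i)).index,
        f ((ℛ k₀ a).left i) * (g ((ℛ k₀ ((ℛ k₀ a).right i)).left j)
          * h ((ℛ k₀ ((ℛ k₀ a).right i)).right j)) := by
    rw [cv_repr f (cv g h) (ℛ k₀ a)]
    refine Finset.sum_congr rfl fun i _ => ?_
    rw [cv_repr g h (ℛ k₀ ((ℛ k₀ a).right i)), Finset.mul_sum]
  rw [e1, e2]
  exact key2.symm

lemma cv_unique {f g g' : C →ₗ[k₀] B} (h1 : cv f g = cvOne)
    (h2 : cv g' f = cvOne) : g' = g := by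
  have h3 : cv g' (cv f g) = cv (cv g' f) g := (cv_assoc g' f g).symm
  rw [h1, h2, cv_one_right, cv_one_left] at h3
  exact h3

variable {H₀ : Type*} [Ring H₀] [HopfAlgebra k₀ H₀]

lemma cv_comul_comul_antipode : cv (Coalgebra.comul (R := k₀) (A := H₀))
    (Coalgebra.comul ∘ₗ HopfAlgebra.antipode (R := k₀)) = cvOne := by
  ext a
  rw [cv_repr _ _ (ℛ k₀ a)]
  have e1 : ∀ i ∈ (ℛ k₀ a).index,
      Coalgebra.comul (R := k₀) ((ℛ k₀ a).left i)
        * (Coalgebra.comul ∘ₗ HopfAlgebra.antipode (R := k₀)) ((ℛ k₀ a).right i)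
      = Coalgebra.comul (R := k₀)
          ((ℛ k₀ a).left i * HopfAlgebra.antipode (R := k₀) ((ℛ k₀ a).right i)) := by
    intro i _
    simp [Bialgebra.comul_mul]
  rw [Finset.sum_congr rfl e1, ← map_sum, sum_mul_antipode_eq_smul (ℛ k₀ a)]
  simp only [map_smul, Bialgebra.comul_one]
  rw [cvOne_apply', Algebra.algebraMap_eq_smul_one]

lemma cv_antipode_comm_comul : cv
    (TensorProduct.map (HopfAlgebra.antipode (R := k₀)) (HopfAlgebra.antipode (R := k₀))
      ∘ₗ (TensorProduct.comm k₀ H₀ H₀).toLinearMap ∘ₗ Coalgebra.comul)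
    (Coalgebra.comul (R := k₀)) = cvOne := by
  ext a
  set S : H₀ →ₗ[k₀] H₀ := HopfAlgebra.antipode (R := k₀) with hS
  set r := ℛ k₀ a with hr
  set Φ : H₀ ⊗[k₀] (H₀ ⊗[k₀] H₀) →ₗ[k₀] H₀ ⊗[k₀] H₀ :=
    LinearMap.mul' k₀ (H₀ ⊗[k₀] H₀)
      ∘ₗ TensorProduct.map (TensorProduct.map S S ∘ₗ (TensorProduct.comm k₀ H₀ H₀).toLinearMap)
          (Coalgebra.comul (R := k₀))
      ∘ₗ (TensorProduct.assoc k₀ H₀ H₀ H₀).symm.toLinearMap with hΦ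
  have hΦt : ∀ u v w : H₀,
      Φ (u ⊗ₜ (v ⊗ₜ w)) = (S v ⊗ₜ[k₀] S u) * Coalgebra.comul (R := k₀) w := by
    intro u v w
    simp [hΦ, TensorProduct.assoc_symm_tmul, LinearMap.mul'_apply]
  rw [cv_repr _ _ r]
  have stepA : ∀ i ∈ r.index,
      (TensorProduct.map S S ∘ₗ (TensorProduct.comm k₀ H₀ H₀).toLinearMap ∘ₗ Coalgebra.comul)
          (r.left i) * Coalgebra.comul (R := k₀) (r.right i)
      = ∑ j ∈ (ℛ k₀ (r.left i)).index,
          Φ ((ℛ k₀ (r.left i)).left j ⊗ₜ ((ℛ k₀ (r.left i)).right j ⊗ₜ r.right i)) := by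
    intro i _
    simp only [LinearMap.comp_apply, ← (ℛ k₀ (r.left i)).eq, map_sum, TensorProduct.comm_tmul,
      TensorProduct.map_tmul, Finset.sum_mul, LinearEquiv.coe_coe, hΦt]
  rw [Finset.sum_congr rfl stepA]
  have key := Coalgebra.sum_tmul_tmul_eq (R := k₀) r (fun i => ℛ k₀ (r.left i))
    (fun i => ℛ k₀ (r.right i))
  have key2 := congrArg Φ key
  simp only [map_sum] at key2
  rw [key2]
  have stepC : ∀ i ∈ r.index,
      ∑ l ∈ (ℛ k₀ (r.right i)).index,
        Φ (r.left i ⊗ₜ ((ℛ k₀ (r.right i)).left l ⊗ₜ (ℛ k₀ (r.right i)).right l))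
      = (1 : H₀) ⊗ₜ[k₀] (S (r.left i) * r.right i) := by
    intro i _
    set r2 := ℛ k₀ (r.right i) with hr2
    set Ψ : H₀ ⊗[k₀] (H₀ ⊗[k₀] H₀) →ₗ[k₀] H₀ ⊗[k₀] H₀ :=
      TensorProduct.map (LinearMap.mul' k₀ H₀ ∘ₗ LinearMap.rTensor H₀ S)
          (LinearMap.mulLeft k₀ (S (r.left i)))
        ∘ₗ (TensorProduct.assoc k₀ H₀ H₀ H₀).symm.toLinearMap with hΨ
    have hΨt : ∀ u v w : H₀, Ψ (u ⊗ₜ (v ⊗ₜ w)) = (S u * v) ⊗ₜ[k₀] (S (r.left i) * w) := by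
      intro u v w
      simp [hΨ, TensorProduct.assoc_symm_tmul, LinearMap.mul'_apply]
    have e2 : ∀ l ∈ r2.index,
        Φ (r.left i ⊗ₜ (r2.left l ⊗ₜ r2.right l))
        = ∑ m ∈ (ℛ k₀ (r2.right l)).index,
            Ψ (r2.left l ⊗ₜ ((ℛ k₀ (r2.right l)).left m ⊗ₜ (ℛ k₀ (r2.right l)).right m)) := by
      intro l _
      rw [hΦt]
      simp only [← (ℛ k₀ (r2.right l)).eq, TensorProduct.tmul_sum, map_sum, Finset.mul_sum, hΨt]
      exact Finset.sum_congr rfl fun m _ => by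
        rw [Algebra.TensorProduct.tmul_mul_tmul]
    rw [Finset.sum_congr rfl e2]
    have keyi := Coalgebra.sum_tmul_tmul_eq (R := k₀) r2 (fun l => ℛ k₀ (r2.left l))
      (fun l => ℛ k₀ (r2.right l))
    have keyi2 := congrArg Ψ keyi
    simp only [map_sum] at keyi2
    rw [← keyi2]
    have e3 : ∀ l ∈ r2.index,
        ∑ m ∈ (ℛ k₀ (r2.left l)).index,
          Ψ ((ℛ k₀ (r2.left l)).left m ⊗ₜ ((ℛ k₀ (r2.left l)).right m ⊗ₜ r2.right l))
        = (1 : H₀) ⊗ₜ[k₀]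
            (Coalgebra.counit (R := k₀) (r2.left l) • (S (r.left i) * r2.right l)) := by
      intro l _
      have e3' : ∑ m ∈ (ℛ k₀ (r2.left l)).index,
          Ψ ((ℛ k₀ (r2.left l)).left m ⊗ₜ ((ℛ k₀ (r2.left l)).right m ⊗ₜ r2.right l))
          = (∑ m ∈ (ℛ k₀ (r2.left l)).index,
              S ((ℛ k₀ (r2.left l)).left m) * (ℛ k₀ (r2.left l)).right m)
            ⊗ₜ[k₀] (S (r.left i) * r2.right l) := by
        rw [TensorProduct.sum_tmul]
        exact Finset.sum_congr rfl fun m _ => hΨt _ _ _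
      rw [e3', sum_antipode_mul_eq_smul (ℛ k₀ (r2.left l)), TensorProduct.smul_tmul]
    rw [Finset.sum_congr rfl e3, ← TensorProduct.tmul_sum]
    congr 1
    have e5 : ∑ l ∈ r2.index,
        Coalgebra.counit (R := k₀) (r2.left l) • (S (r.left i) * r2.right l)
        = S (r.left i) * ∑ l ∈ r2.index, Coalgebra.counit (R := k₀) (r2.left l) • r2.right l := by
      rw [Finset.mul_sum]
      exact Finset.sum_congr rfl fun l _ => (mul_smul_comm _ _ _).symm
    rw [e5, counit_smul_sum r2]
  rw [Finset.sum_congr rfl stepC, ← TensorProduct.tmul_sum, sum_antipode_mul_eq_smul r]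
  rw [cvOne_apply', Algebra.algebraMap_eq_smul_one, Algebra.TensorProduct.one_def,
    TensorProduct.tmul_smul]

/-- The antipode is an anti-coalgebra morphism. -/
lemma comul_antipode : Coalgebra.comul ∘ₗ HopfAlgebra.antipode (R := k₀) (A := H₀)
    = TensorProduct.map (HopfAlgebra.antipode (R := k₀)) (HopfAlgebra.antipode (R := k₀))
      ∘ₗ (TensorProduct.comm k₀ H₀ H₀).toLinearMap ∘ₗ Coalgebra.comul :=
  (cv_unique cv_comul_comul_antipode cv_antipode_comm_comul).symm

end ConvolutionAux

section IntegralAux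

open Coalgebra HopfAlgebra

/-- The key left-integral identity: `∑ ∫(x S(h₁)) h₂ = ∑ x₁ ∫(x₂ S(h))`. -/
lemma lemK (I : H →ₗ[k] k) (hI : IsLeftIntegral k H I) (x h : H) {ι : Type*} (r : Coalgebra.Repr k h ι) :
    ∑ i ∈ r.index, I (x * HopfAlgebra.antipode (R := k) (r.left i)) • r.right i
      = TensorProduct.rid k H ((LinearMap.lTensor H
          (I ∘ₗ LinearMap.mulRight k (HopfAlgebra.antipode (R := k) h))) (Coalgebra.comul x)) := by
  set S : H →ₗ[k] H := HopfAlgebra.antipode (R := k) with hS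
  set rx := ℛ k x with hrx
  have hca : ∀ y : H, Coalgebra.comul (R := k) (S y)
      = TensorProduct.map S S ((TensorProduct.comm k H H) (Coalgebra.comul y)) := by
    intro y
    have := LinearMap.congr_fun (comul_antipode (k₀ := k) (H₀ := H)) y
    simpa using this
  have hRHS : TensorProduct.rid k H ((LinearMap.lTensor H (I ∘ₗ LinearMap.mulRight k (S h)))
      (Coalgebra.comul x)) = ∑ p ∈ rx.index, I (rx.right p * S h) • rx.left p := by
    simp only [← rx.eq, map_sum, LinearMap.lTensor_tmul, LinearMap.comp_apply,
      LinearMap.mulRight_apply, TensorProduct.rid_tmul]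
  rw [hRHS]
  have step1 : ∀ i ∈ r.index, I (x * S (r.left i)) • r.right i
      = ∑ p ∈ rx.index, ∑ j ∈ (ℛ k (r.left i)).index,
          I (rx.right p * S ((ℛ k (r.left i)).left j))
            • (rx.left p * (S ((ℛ k (r.left i)).right j) * r.right i)) := by
    intro i _
    have h1 : I (x * S (r.left i)) • (1 : H)
        = TensorProduct.rid k H ((LinearMap.lTensor H I)
            (Coalgebra.comul (x * S (r.left i)))) := (hI _).symm
    have h2 : Coalgebra.comul (R := k) (x * S (r.left i))
        = ∑ p ∈ rx.index, ∑ j ∈ (ℛ k (r.left i)).index,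
            (rx.left p * S ((ℛ k (r.left i)).right j))
              ⊗ₜ[k] (rx.right p * S ((ℛ k (r.left i)).left j)) := by
      rw [Bialgebra.comul_mul, hca, ← rx.eq, ← (ℛ k (r.left i)).eq]
      rw [map_sum, map_sum, Finset.sum_mul_sum]
      simp only [TensorProduct.comm_tmul, TensorProduct.map_tmul,
        Algebra.TensorProduct.tmul_mul_tmul]
    have h3 : I (x * S (r.left i)) • r.right i
        = (I (x * S (r.left i)) • (1 : H)) * r.right i := by
      rw [smul_mul_assoc, one_mul]
    rw [h3, h1, h2]
    simp only [map_sum, LinearMap.lTensor_tmul, TensorProduct.rid_tmul, Finset.sum_mul,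
      smul_mul_assoc, mul_assoc]
  rw [Finset.sum_congr rfl step1, Finset.sum_comm]
  refine Finset.sum_congr rfl fun p _ => ?_
  set Φ : H ⊗[k] (H ⊗[k] H) →ₗ[k] H :=
    (TensorProduct.lid k H).toLinearMap
      ∘ₗ TensorProduct.map (I ∘ₗ LinearMap.mulLeft k (rx.right p) ∘ₗ S)
          (LinearMap.mulLeft k (rx.left p) ∘ₗ LinearMap.mul' k H ∘ₗ LinearMap.rTensor H S)
    with hΦ
  have hΦt : ∀ u v w : H, Φ (u ⊗ₜ (v ⊗ₜ w))
      = I (rx.right p * S u) • (rx.left p * (S v * w)) := by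
    intro u v w
    simp [hΦ, LinearMap.mul'_apply]
  have key := Coalgebra.sum_tmul_tmul_eq (R := k) r (fun i => ℛ k (r.left i))
    (fun i => ℛ k (r.right i))
  have key2 := congrArg Φ key
  simp only [map_sum, hΦt] at key2
  rw [key2]
  have e4 : ∀ i ∈ r.index,
      ∑ l ∈ (ℛ k (r.right i)).index,
        I (rx.right p * S (r.left i)) • (rx.left p * (S ((ℛ k (r.right i)).left l)
          * (ℛ k (r.right i)).right l))
      = (Coalgebra.counit (R := k) (r.right i) * I (rx.right p * S (r.left i))) • rx.left p := by
    intro i _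
    rw [← Finset.smul_sum, ← Finset.mul_sum, sum_antipode_mul_eq_smul (ℛ k (r.right i))]
    rw [mul_smul_comm, mul_one, smul_smul, mul_comm]
  rw [Finset.sum_congr rfl e4, ← Finset.sum_smul]
  congr 1
  have := congrArg (fun z => I (rx.right p * S z)) (sum_smul_counit r)
  simp only [map_sum, map_smul, Finset.mul_sum, mul_smul_comm, smul_eq_mul] at this
  exact this

lemma convProd_repr (I : H →ₗ[k] k) (g h : H) {ι : Type*} (r : Coalgebra.Repr k h ι) :
    convProd k H I g h = ∑ i ∈ r.index,
      I (r.right i * HopfAlgebra.antipode (R := k) g) • r.left i := by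
  simp only [convProd, convMap, intPair, LinearMap.comp_apply, LinearEquiv.coe_coe,
    TensorProduct.comm_tmul, LinearMap.rTensor_tmul, ← r.eq, TensorProduct.sum_tmul, map_sum,
    TensorProduct.assoc_tmul, LinearMap.lTensor_tmul, LinearMap.mul'_apply,
    TensorProduct.rid_tmul]

/-- The functional `x ↦ ∫(x S(g*h))` is the convolution of `x ↦ ∫(x S(g))`, `x ↦ ∫(x S(h))`. -/
lemma lemK' (I : H →ₗ[k] k) (hI : IsLeftIntegral k H I) (g h : H) :
    I ∘ₗ LinearMap.mulRight k (HopfAlgebra.antipode (R := k) (convProd k H I g h))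
      = cv (I ∘ₗ LinearMap.mulRight k (HopfAlgebra.antipode (R := k) g))
          (I ∘ₗ LinearMap.mulRight k (HopfAlgebra.antipode (R := k) h)) := by
  ext x
  set S : H →ₗ[k] H := HopfAlgebra.antipode (R := k) with hS
  set rx := ℛ k x with hrx
  set r := ℛ k h with hr
  have base := lemK k H I hI x h r
  have hRHS : TensorProduct.rid k H ((LinearMap.lTensor H (I ∘ₗ LinearMap.mulRight k (S h)))
      (Coalgebra.comul x)) = ∑ p ∈ rx.index, I (rx.right p * S h) • rx.left p := by
    simp only [← rx.eq, map_sum, LinearMap.lTensor_tmul, LinearMap.comp_apply,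
      LinearMap.mulRight_apply, TensorProduct.rid_tmul]
  rw [hRHS] at base
  have base2 := congrArg (fun z => I (z * S g)) base
  simp only [Finset.sum_mul, Finset.smul_sum, smul_mul_assoc, map_sum, map_smul,
    smul_eq_mul] at base2
  have eL : (I ∘ₗ LinearMap.mulRight k (S (convProd k H I g h))) x
      = ∑ i ∈ r.index, I (x * S (r.left i)) * I (r.right i * S g) := by
    rw [LinearMap.comp_apply, LinearMap.mulRight_apply, convProd_repr k H I g h r]
    rw [map_sum]
    rw [Finset.mul_sum, map_sum]
    refine Finset.sum_congr rfl fun i _ => ?_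
    rw [map_smul, mul_smul_comm, map_smul, smul_eq_mul, mul_comm]
  have eR : cv (I ∘ₗ LinearMap.mulRight k (S g)) (I ∘ₗ LinearMap.mulRight k (S h)) x
      = ∑ p ∈ rx.index, I (rx.right p * S h) * I (rx.left p * S g) := by
    rw [cv_repr _ _ rx]
    refine Finset.sum_congr rfl fun p _ => ?_
    simp only [LinearMap.comp_apply, LinearMap.mulRight_apply]
    rw [mul_comm]
  rw [eL, eR, ← base2]

end IntegralAux

/-- For a right `H`-comodule `V`, the formula `h * v := v₀ ∫(v₁ S(h))` defines a left module
structure over the non-unital convolution algebra `(H, *)`. -/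
theorem convAct_is_module (I : H →ₗ[k] k) (hI : IsLeftIntegral k H I) (hne : I ≠ 0)
    (ρ : M →ₗ[k] M ⊗[k] H) (hρ : IsCoact k H M ρ) :
    ∀ (g h : H) (v : M),
      convAct k H M I ρ (convProd k H I g h) v = convAct k H M I ρ g (convAct k H M I ρ h v) := by
  intro g h v
  have e1 : convAct k H M I ρ (convProd k H I g h) v
      = TensorProduct.rid k M ((LinearMap.lTensor M (cv
          (I ∘ₗ LinearMap.mulRight k (HopfAlgebra.antipode (R := k) g))
          (I ∘ₗ LinearMap.mulRight k (HopfAlgebra.antipode (R := k) h)))) (ρ v)) := by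
    rw [show convAct k H M I ρ (convProd k H I g h) v = TensorProduct.rid k M
        ((LinearMap.lTensor M (I ∘ₗ LinearMap.mulRight k (HopfAlgebra.antipode (R := k)
          (convProd k H I g h)))) (ρ v)) from rfl, lemK' k H I hI g h]
  rw [e1]
  set φg : H →ₗ[k] k := I ∘ₗ LinearMap.mulRight k (HopfAlgebra.antipode (R := k) g) with hφg
  set φh : H →ₗ[k] k := I ∘ₗ LinearMap.mulRight k (HopfAlgebra.antipode (R := k) h) with hφh
  have hco := LinearMap.congr_fun hρ.1 v
  simp only [LinearMap.comp_apply, LinearEquiv.coe_coe] at hco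
  have hsplit : LinearMap.lTensor M (cv φg φh)
      = LinearMap.lTensor M (LinearMap.mul' k k ∘ₗ TensorProduct.map φg φh)
          ∘ₗ LinearMap.lTensor M (Coalgebra.comul (R := k)) := by
    rw [← LinearMap.lTensor_comp]
    rfl
  rw [hsplit, LinearMap.comp_apply, ← hco]
  have P : ∀ u : (M ⊗[k] H) ⊗[k] H,
      TensorProduct.rid k M ((LinearMap.lTensor M (LinearMap.mul' k k
          ∘ₗ TensorProduct.map φg φh)) ((TensorProduct.assoc k M H H) u))
      = TensorProduct.rid k M ((LinearMap.lTensor M φh)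
          ((LinearMap.rTensor H ((TensorProduct.rid k M).toLinearMap
            ∘ₗ LinearMap.lTensor M φg)) u)) := by
    intro u
    induction u using TensorProduct.induction_on with
    | zero => simp
    | add a b ha hb => simp only [map_add, ha, hb]
    | tmul t z =>
      induction t using TensorProduct.induction_on with
      | zero => simp [TensorProduct.zero_tmul]
      | add a b ha hb => simp only [TensorProduct.add_tmul, map_add, ha, hb]
      | tmul m y =>
        simp only [TensorProduct.assoc_tmul, LinearMap.lTensor_tmul, LinearMap.rTensor_tmul,
          LinearMap.comp_apply, TensorProduct.map_tmul, LinearMap.mul'_apply,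
          TensorProduct.rid_tmul, LinearEquiv.coe_coe, map_smul, TensorProduct.smul_tmul',
          smul_smul]
        rw [mul_comm]
  rw [P]
  have swap : ∀ t : M ⊗[k] H,
      TensorProduct.rid k M ((LinearMap.lTensor M φg)
        (ρ (TensorProduct.rid k M ((LinearMap.lTensor M φh) t))))
      = TensorProduct.rid k M ((LinearMap.lTensor M φh)
          ((LinearMap.rTensor H (((TensorProduct.rid k M).toLinearMap
            ∘ₗ LinearMap.lTensor M φg) ∘ₗ ρ)) t)) := by
    intro t
    induction t using TensorProduct.induction_on with
    | zero => simp
    | add a b ha hb => simp only [map_add, ha, hb]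
    | tmul m y =>
      simp only [LinearMap.lTensor_tmul, TensorProduct.rid_tmul, LinearMap.rTensor_tmul,
        LinearMap.comp_apply, LinearEquiv.coe_coe, map_smul, TensorProduct.smul_tmul']
  have eR2 : convAct k H M I ρ g (convAct k H M I ρ h v)
      = TensorProduct.rid k M ((LinearMap.lTensor M φg)
        (ρ (TensorProduct.rid k M ((LinearMap.lTensor M φh) (ρ v))))) := rfl
  rw [eR2, swap (ρ v)]
  simp only [LinearMap.rTensor_comp, LinearMap.comp_apply]

end
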